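/- arXiv:2007.09576 — 2 statements merged into one kernel-verified Lean document; each statement's English description precedes it below -/
import Mathlib

section
/- σ_U² − σ_A² = E[{π_s β_t(Z) + π_t β_s(Z)}^T Σ(Z) {π_s β_t(Z) + π_t β_s(Z)}] / {π_t π_s (π_t + π_s)} + E[{β_t(Z) − β_s(Z)}^T Σ(Z) {β_t(Z) − β_s(Z)}] · {(π_t + π_s)^{-1} − 1}. -/
open MeasureTheory ProbabilityTheory Matrix
open scoped ProbabilityTheory

/-!
Within a stratum, subtracting the population projection `Xᵀβ` with `Σ β = cov(X, Y)` lowers the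
variance of `Y` by exactly `βᵀ Σ β`. Hence `σ_U² − σ_A²` is the `P(Z = z)`-weighted sum of
`β_tᵀΣβ_t / π_t + β_sᵀΣβ_s / π_s − (β_t − β_s)ᵀΣ(β_t − β_s)`, and the claimed form is an
algebraic rewriting of this expression that holds for every bilinear form.
-/

theorem MeasureTheory.MemLp.cond {Ω E : Type*} [MeasurableSpace Ω] [NormedAddCommGroup E]
    {μ : Measure Ω} {s : Set Ω} {p : ENNReal} {f : Ω → E} (hf : MemLp f p μ) (hs : μ s ≠ 0) :
    MemLp f p μ[|s] :=
  (hf.restrict s).smul_measure (ENNReal.inv_ne_top.mpr hs)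

section Projection

variable {Ω ι : Type*} [MeasurableSpace Ω] {μ : Measure Ω} [Fintype ι]
  {Y : Ω → ℝ} {X : Ω → ι → ℝ}

theorem variance_sub_sum_mul [IsFiniteMeasure μ] (hY : MemLp Y 2 μ)
    (hX : ∀ j, MemLp (fun ω => X ω j) 2 μ) (b : ι → ℝ) :
    Var[fun ω => Y ω - ∑ j, X ω j * b j; μ]
      = Var[Y; μ] - 2 * b ⬝ᵥ (fun j => cov[fun ω => X ω j, Y; μ])
        + b ⬝ᵥ (Matrix.of (fun j l => cov[fun ω => X ω j, fun ω => X ω l; μ]) *ᵥ b) := by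
  have hXb : ∀ j, MemLp (fun ω => X ω j * b j) 2 μ := fun j => (hX j).mul_const (b j)
  rw [variance_fun_sub hY (memLp_finsetSum _ fun j _ => hXb j),
    covariance_fun_sum_right (X := fun j ω => X ω j * b j) hXb hY,
    variance_fun_sum (X := fun j ω => X ω j * b j) hXb]
  simp only [covariance_mul_const_left, covariance_mul_const_right, covariance_comm Y,
    dotProduct, mulVec, of_apply, Finset.mul_sum]
  congr 2
  · exact Finset.sum_congr rfl fun j _ => by ring
  · ext j
    exact Finset.sum_congr rfl fun l _ => by ring

theorem variance_sub_projection [IsFiniteMeasure μ] (hY : MemLp Y 2 μ)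
    (hX : ∀ j, MemLp (fun ω => X ω j) 2 μ) {S : Matrix ι ι ℝ}
    (hS : S = Matrix.of fun j l => cov[fun ω => X ω j, fun ω => X ω l; μ]) {b : ι → ℝ}
    (hb : S *ᵥ b = fun j => cov[fun ω => X ω j, Y; μ]) :
    Var[fun ω => Y ω - ∑ j, X ω j * b j; μ] = Var[Y; μ] - b ⬝ᵥ (S *ᵥ b) := by
  rw [variance_sub_sum_mul hY hX, ← hS, ← hb]
  ring

end Projection

theorem LinearMap.BilinForm.apply_div_add_apply_div_sub_apply_sub {K M : Type*} [Field K]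
    [AddCommGroup M] [Module K M] (B : LinearMap.BilinForm K M) (a b : M) {p q : K}
    (hp : p ≠ 0) (hq : q ≠ 0) (hpq : p + q ≠ 0) :
    B a a / p + B b b / q - B (a - b) (a - b)
      = B (q • a + p • b) (q • a + p • b) / (p * q * (p + q))
        + B (a - b) (a - b) * ((p + q)⁻¹ - 1) := by
  simp only [map_add, map_sub, map_smul, LinearMap.add_apply, LinearMap.sub_apply,
    LinearMap.smul_apply, smul_eq_mul]
  field_simp
  ring

theorem stmt3_general {Ω : Type*} [MeasurableSpace Ω] (P : Measure Ω) [IsProbabilityMeasure P]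
    {𝓩 : Type*} [Fintype 𝓩]
    {k d : ℕ}
    (π : Fin k → ℝ) (hπ : ∀ t, π t ∈ Set.Ioo (0 : ℝ) 1)
    (Y : Fin k → Ω → ℝ)
    (hY2 : ∀ t, MemLp (Y t) 2 P)
    (Z : Ω → 𝓩)
    (hZpos : ∀ z, 0 < P {ω | Z ω = z})
    (X : Ω → Fin d → ℝ)
    (hX2 : ∀ j, MemLp (fun ω => X ω j) 2 P)
    -- conditional measures and stratum probabilities
    (condP : 𝓩 → Measure Ω) (hcondP : ∀ z, condP z = P[|{ω | Z ω = z}])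
    (pz : 𝓩 → ℝ)
    -- conditional covariance matrices, assumed positive definite
    (Smat : 𝓩 → Matrix (Fin d) (Fin d) ℝ)
    (hSmat : ∀ z j l, Smat z j l
      = ∫ ω, X ω j * X ω l ∂(condP z)
        - (∫ ω, X ω j ∂(condP z)) * (∫ ω, X ω l ∂(condP z)))
    (hSpd : ∀ z, (Smat z).PosDef)
    -- projection coefficients
    (β : Fin k → 𝓩 → Fin d → ℝ)
    (hβ : ∀ t z, β t z = (Smat z)⁻¹ *ᵥ fun j =>
      ∫ ω, X ω j * Y t ω ∂(condP z)
        - (∫ ω, X ω j ∂(condP z)) * (∫ ω, Y t ω ∂(condP z)))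
    -- the two fixed treatments
    (tt ss : Fin k)
    -- the asymptotic variance components
    (σU2 σA2 : ℝ)
    (hσU2 : σU2 = ∑ z, pz z *
      (variance (Y tt) (condP z) / π tt + variance (Y ss) (condP z) / π ss))
    (hσA2 : σA2
      = (∑ z, pz z *
          (variance (fun ω => Y tt ω - ∑ j, X ω j * β tt z j) (condP z) / π tt
            + variance (fun ω => Y ss ω - ∑ j, X ω j * β ss z j) (condP z) / π ss))
        + ∑ z, pz z *
            ((β tt z - β ss z) ⬝ᵥ (Smat z *ᵥ (β tt z - β ss z)))) :
    σU2 - σA2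
      = (∑ z, pz z *
          ((π ss • β tt z + π tt • β ss z) ⬝ᵥ
            (Smat z *ᵥ (π ss • β tt z + π tt • β ss z))))
          / (π tt * π ss * (π tt + π ss))
        + (∑ z, pz z *
            ((β tt z - β ss z) ⬝ᵥ (Smat z *ᵥ (β tt z - β ss z))))
          * ((π tt + π ss)⁻¹ - 1) := by
  have hprob : ∀ z, IsProbabilityMeasure (condP z) := fun z =>
    hcondP z ▸ cond_isProbabilityMeasure (hZpos z).ne'
  have hmemLp : ∀ z {f : Ω → ℝ}, MemLp f 2 P → MemLp f 2 (condP z) := fun z _ hf =>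
    hcondP z ▸ hf.cond (hZpos z).ne'
  have hcov : ∀ z {f g : Ω → ℝ}, MemLp f 2 P → MemLp g 2 P →
      ∫ ω, f ω * g ω ∂(condP z) - (∫ ω, f ω ∂(condP z)) * (∫ ω, g ω ∂(condP z))
        = cov[f, g; condP z] := fun z _ _ hf hg =>
    (covariance_eq_sub (hmemLp z hf) (hmemLp z hg)).symm
  have hvar : ∀ t z, Var[fun ω => Y t ω - ∑ j, X ω j * β t z j; condP z]
      = Var[Y t; condP z] - β t z ⬝ᵥ (Smat z *ᵥ β t z) := by
    refine fun t z => variance_sub_projection (hmemLp z (hY2 t)) (fun j => hmemLp z (hX2 j)) ?_ ?_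
    · ext j l
      exact (hSmat z j l).trans (hcov z (hX2 j) (hX2 l))
    · rw [hβ, mulVec_mulVec, mul_nonsing_inv _ (hSpd z).det_pos.ne'.isUnit, one_mulVec]
      exact funext fun j => hcov z (hX2 j) (hY2 t)
  have hπt := (hπ tt).1.ne'
  have hπs := (hπ ss).1.ne'
  have hπts := (add_pos (hπ tt).1 (hπ ss).1).ne'
  rw [hσU2, hσA2, ← sub_sub, ← Finset.sum_sub_distrib, ← Finset.sum_sub_distrib,
    Finset.sum_div, Finset.sum_mul, ← Finset.sum_add_distrib]
  refine Finset.sum_congr rfl fun z _ => ?_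
  have hquad := (toBilin' (Smat z)).apply_div_add_apply_div_sub_apply_sub
    (β tt z) (β ss z) hπt hπs hπts
  simp only [toBilin'_apply'] at hquad
  rw [hvar, hvar]
  linear_combination pz z * hquad

/-- In the population setup with strata `Z = g ∘ W`, adjustment covariate
`X = h ∘ W`, conditional covariance matrices `Smat z = var(X | Z = z)` (positive definite),
projection coefficients `β t z = Smat z⁻¹ cov(X, Y⁽ᵗ⁾ | Z = z)`, and
`σU² = E[var(Y⁽ᵗ⁾|Z)/πt + var(Y⁽ˢ⁾|Z)/πs]`,
`σA² = E[var(Y⁽ᵗ⁾ − Xᵀβ_t(Z)|Z)/πt + var(Y⁽ˢ⁾ − Xᵀβ_s(Z)|Z)/πs]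
      + E[(β_t(Z) − β_s(Z))ᵀ Σ(Z) (β_t(Z) − β_s(Z))]`, one has
`σU² − σA² = E[(πs β_t(Z) + πt β_s(Z))ᵀ Σ(Z) (πs β_t(Z) + πt β_s(Z))]/(πt πs (πt+πs))
      + E[(β_t(Z) − β_s(Z))ᵀ Σ(Z) (β_t(Z) − β_s(Z))]·((πt+πs)⁻¹ − 1)`. -/
theorem stmt3 {Ω : Type*} [MeasurableSpace Ω] (P : Measure Ω) [IsProbabilityMeasure P]
    {𝓦 : Type*} [MeasurableSpace 𝓦]
    {𝓩 : Type*} [Fintype 𝓩] [MeasurableSpace 𝓩] [MeasurableSingletonClass 𝓩]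
    {k d : ℕ} (hk : 2 ≤ k)
    (π : Fin k → ℝ) (hπ : ∀ t, π t ∈ Set.Ioo (0 : ℝ) 1) (hπsum : ∑ t, π t = 1)
    (Y : Fin k → Ω → ℝ) (W : Ω → 𝓦)
    (hYmeas : ∀ t, Measurable (Y t)) (hWmeas : Measurable W)
    (hY2 : ∀ t, MemLp (Y t) 2 P)
    (g : 𝓦 → 𝓩) (hg : Measurable g)
    (Z : Ω → 𝓩) (hZdef : ∀ ω, Z ω = g (W ω))
    (hZpos : ∀ z, 0 < P {ω | Z ω = z})
    (h : 𝓦 → Fin d → ℝ) (hh : Measurable h)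
    (X : Ω → Fin d → ℝ) (hXdef : ∀ ω, X ω = h (W ω))
    (hX2 : ∀ j, MemLp (fun ω => X ω j) 2 P)
    (hXY2 : ∀ t j, MemLp (fun ω => X ω j * Y t ω) 2 P)
    -- conditional measures and stratum probabilities
    (condP : 𝓩 → Measure Ω) (hcondP : ∀ z, condP z = P[|{ω | Z ω = z}])
    (pz : 𝓩 → ℝ) (hpz : ∀ z, pz z = (P {ω | Z ω = z}).toReal)
    -- conditional covariance matrices, assumed positive definite
    (Smat : 𝓩 → Matrix (Fin d) (Fin d) ℝ)
    (hSmat : ∀ z j l, Smat z j l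
      = ∫ ω, X ω j * X ω l ∂(condP z)
        - (∫ ω, X ω j ∂(condP z)) * (∫ ω, X ω l ∂(condP z)))
    (hSpd : ∀ z, (Smat z).PosDef)
    -- projection coefficients
    (β : Fin k → 𝓩 → Fin d → ℝ)
    (hβ : ∀ t z, β t z = (Smat z)⁻¹ *ᵥ fun j =>
      ∫ ω, X ω j * Y t ω ∂(condP z)
        - (∫ ω, X ω j ∂(condP z)) * (∫ ω, Y t ω ∂(condP z)))
    -- the two fixed treatments
    (tt ss : Fin k) (hts : tt ≠ ss)
    -- the asymptotic variance components
    (σU2 σA2 : ℝ)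
    (hσU2 : σU2 = ∑ z, pz z *
      (variance (Y tt) (condP z) / π tt + variance (Y ss) (condP z) / π ss))
    (hσA2 : σA2
      = (∑ z, pz z *
          (variance (fun ω => Y tt ω - ∑ j, X ω j * β tt z j) (condP z) / π tt
            + variance (fun ω => Y ss ω - ∑ j, X ω j * β ss z j) (condP z) / π ss))
        + ∑ z, pz z *
            ((β tt z - β ss z) ⬝ᵥ (Smat z *ᵥ (β tt z - β ss z)))) :
    σU2 - σA2
      = (∑ z, pz z *
          ((π ss • β tt z + π tt • β ss z) ⬝ᵥ
            (Smat z *ᵥ (π ss • β tt z + π tt • β ss z))))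
          / (π tt * π ss * (π tt + π ss))
        + (∑ z, pz z *
            ((β tt z - β ss z) ⬝ᵥ (Smat z *ᵥ (β tt z - β ss z))))
          * ((π tt + π ss)⁻¹ - 1) :=
  stmt3_general P π hπ Y hY2 Z hZpos X hX2 condP hcondP pz Smat hSmat hSpd β hβ tt ss σU2 σA2 hσU2
    hσA2
end

section
/- Under conditions (C1)–(C3), for every fixed n, almost surely on the event {n_t(z) ≥ 1 and n_s(z) ≥ 1 for all z ∈ 𝒵}, the conditional expectation of θ̂ given the σ-algebra 𝒟_n generated by (Z_1, …, Z_n, I_1, …, I_n) equals ∑_{z∈𝒵} (n(z)/n){E(Y^{(t)} | Z = z) − E(Y^{(s)} | Z = z)}; in particular E[θ̂ | 𝒟_n] is free of the treatment assignments beyond the stratum counts. -/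
/-!
Given `𝒟ₙ`, a conditional expectation is the average over the atom of `(Z_j, I_j)_{j < n}`
containing `ω`. On that atom `θ̂` is a fixed linear combination of the `Y_j`, so it suffices that
each `Y_j^{(t)}` averages to `E(Y^{(t)} | Z = Z_j)` over the atom. Under `P(· | Z_{1..n} = v)`,
(C2) makes the assignments independent of the data, which removes the conditioning on the `I_j`;
independence across units then removes the conditioning on the other strata, and identical
distribution turns the remaining stratum average into the population one.
-/

open MeasureTheory ProbabilityTheory Finset

namespace ProbabilityTheory

variable {Ω α : Type*} {m : MeasurableSpace Ω} {μ : Measure Ω} {f : Ω → ℝ} {s : Set Ω}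

lemma integral_cond_eq_inv_mul_setIntegral :
    ∫ x, f x ∂μ[|s] = (μ.real s)⁻¹ * ∫ x in s, f x ∂μ := by
  rw [cond, integral_smul_measure, smul_eq_mul, ENNReal.toReal_inv, measureReal_def]

lemma _root_.MeasureTheory.Integrable.cond (hf : Integrable f μ) (s : Set Ω) :
    Integrable f μ[|s] := by
  by_cases hs : μ s = 0
  · simp [cond_eq_zero_of_meas_eq_zero hs]
  · exact hf.restrict.smul_measure (ENNReal.inv_ne_top.2 hs)

lemma Indep.cond {m₁ m₂ : MeasurableSpace Ω} [IsFiniteMeasure μ] (h : Indep m₁ m₂ μ)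
    (hle₁ : m₁ ≤ m) (hs : MeasurableSet[m₁] s) : Indep m₁ m₂ μ[|s] := by
  rw [Indep_iff] at h ⊢
  intro t₁ t₂ ht₁ ht₂
  by_cases hμs : μ s = 0
  · simp [cond_eq_zero_of_meas_eq_zero hμs]
  have hsm := hle₁ s hs
  rw [cond_apply hsm, cond_apply hsm, cond_apply hsm, ← Set.inter_assoc,
    h _ _ (hs.inter ht₁) ht₂, h _ _ hs ht₂, ← mul_assoc (μ s)⁻¹ (μ s),
    ENNReal.inv_mul_cancel hμs (measure_ne_top _ _), one_mul, mul_assoc]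

lemma integral_cond_eq_integral_of_indep {m₁ m₂ : MeasurableSpace Ω} [IsFiniteMeasure μ]
    (h : Indep m₁ m₂ μ) (hle₁ : m₁ ≤ m) (hle₂ : m₂ ≤ m) (hf : StronglyMeasurable[m₁] f)
    (hfi : Integrable f μ) (hs : MeasurableSet[m₂] s) (hμs : μ s ≠ 0) :
    ∫ x, f x ∂μ[|s] = ∫ x, f x ∂μ := by
  have hμs' : μ.real s ≠ 0 := by simp [measureReal_def, ENNReal.toReal_eq_zero_iff, hμs]
  rw [integral_cond_eq_inv_mul_setIntegral, ← setIntegral_condExp hle₂ hfi hs,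
    setIntegral_congr_ae (hle₂ s hs) ((condExp_indep_eq hle₁ hle₂ hf h).mono fun _ hx _ => hx),
    setIntegral_const, smul_eq_mul, ← mul_assoc, inv_mul_cancel₀ hμs', one_mul]

lemma ae_measure_preimage_singleton_ne_zero [Countable α] {X : Ω → α} :
    ∀ᵐ ω ∂μ, μ (X ⁻¹' {X ω}) ≠ 0 := by
  rw [ae_iff]
  refine measure_mono_null (t := ⋃ c ∈ {c : α | μ (X ⁻¹' {c}) = 0}, X ⁻¹' {c}) ?_
    ((measure_biUnion_null_iff (Set.to_countable _)).2 fun c hc => hc)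
  exact fun ω hω => Set.mem_biUnion (x := X ω) (not_not.1 hω) rfl

lemma integrable_of_forall_integrable_cond_preimage [Fintype α] [MeasurableSpace α]
    [MeasurableSingletonClass α] [IsFiniteMeasure μ] {X : Ω → α} (hX : Measurable X)
    (h : ∀ ω, Integrable f μ[|X ⁻¹' {X ω}]) : Integrable f μ := by
  rw [← sum_meas_smul_cond_fiber hX μ, integrable_finsetSum_measure]
  intro c _
  by_cases hc : μ (X ⁻¹' {c}) = 0
  · simp [hc]
  obtain ⟨ω, rfl⟩ : ∃ ω, X ω = c := by
    by_contra! hne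
    exact hc (by simp [Set.preimage_singleton_eq_empty.2 (by simpa [Set.mem_range] using hne)])
  exact (h ω).smul_measure (measure_ne_top _ _)

lemma condExp_comap_ae_eq_integral_cond [Finite α] [mα : MeasurableSpace α]
    [MeasurableSingletonClass α] [IsFiniteMeasure μ] {X : Ω → α} (hX : Measurable X)
    (hf : Integrable f μ) :
    μ[f | mα.comap X] =ᵐ[μ] fun ω => ∫ x, f x ∂μ[|X ⁻¹' {X ω}] := by
  set Φ : α → ℝ := fun c => ∫ x, f x ∂μ[|X ⁻¹' {c}] with hΦ
  have hatom : ∀ c, ∫ x in X ⁻¹' {c}, Φ (X x) ∂μ = ∫ x in X ⁻¹' {c}, f x ∂μ := by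
    intro c
    rw [setIntegral_congr_fun (hX (measurableSet_singleton c)) fun x (hx : X x = c) => by
      rw [hx], setIntegral_const, smul_eq_mul]
    simp only [hΦ, integral_cond_eq_inv_mul_setIntegral]
    by_cases hc : μ.real (X ⁻¹' {c}) = 0
    · rw [hc, zero_mul,
        setIntegral_measure_zero _ ((measureReal_eq_zero_iff (measure_ne_top _ _)).1 hc)]
    · rw [← mul_assoc, mul_inv_cancel₀ hc, one_mul]
  have hΦint : Integrable (Φ ∘ X) μ := Integrable.of_finite.comp_measurable hX
  refine (ae_eq_condExp_of_forall_setIntegral_eq hX.comap_le hf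
    (fun s _ _ => hΦint.integrableOn) ?_
    ((measurable_of_finite Φ).comp (Measurable.of_comap_le le_rfl)).aestronglyMeasurable).symm
  rintro _ ⟨u, -, rfl⟩ -
  have hu : X ⁻¹' u = ⋃ c ∈ (Set.toFinite u).toFinset, X ⁻¹' {c} := by ext; simp
  have hdisj : Set.PairwiseDisjoint ↑(Set.toFinite u).toFinset fun c => X ⁻¹' {c} :=
    fun c _ d _ hcd => Set.disjoint_left.2 fun x (hc : X x = c) (hd : X x = d) => hcd (hc ▸ hd)
  have hmeas c (_ : c ∈ (Set.toFinite u).toFinset) := hX (measurableSet_singleton c)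
  rw [hu, integral_biUnion_finset _ hmeas hdisj fun _ _ => hΦint.integrableOn,
    integral_biUnion_finset _ hmeas hdisj fun _ _ => hf.integrableOn]
  exact Finset.sum_congr rfl fun c _ => hatom c

lemma indep_cond_preimage_of_condExp_indicator_inter [Finite α] [mα : MeasurableSpace α]
    [MeasurableSingletonClass α] [IsFiniteMeasure μ] {X : Ω → α} (hX : Measurable X)
    {m₁ m₂ : MeasurableSpace Ω} (hle₁ : m₁ ≤ m) (hle₂ : m₂ ≤ m)
    (h : ∀ A B, MeasurableSet[m₁] A → MeasurableSet[m₂] B →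
      μ[(A ∩ B).indicator (1 : Ω → ℝ) | mα.comap X]
        =ᵐ[μ] μ[A.indicator 1 | mα.comap X] * μ[B.indicator 1 | mα.comap X])
    (c : α) : Indep m₁ m₂ μ[|X ⁻¹' {c}] := by
  rw [Indep_iff]
  intro A B hA hB
  by_cases hc : μ (X ⁻¹' {c}) = 0
  · simp [cond_eq_zero_of_meas_eq_zero hc]
  have hE : ∀ D, MeasurableSet[m] D →
      μ[D.indicator (1 : Ω → ℝ) | mα.comap X] =ᵐ[μ] fun ω => μ[|X ⁻¹' {X ω}].real D := fun D hD =>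
    (condExp_comap_ae_eq_integral_cond hX ((integrable_const 1).indicator hD)).trans
      (ae_of_all _ fun ω => integral_indicator_one hD)
  have hAm := hle₁ A hA
  have hBm := hle₂ B hB
  obtain ⟨ω, hωc, hprod, hAB, hA', hB'⟩ := Measure.exists_mem_of_measure_ne_zero_of_ae hc
    (ae_restrict_of_ae ((h A B hA hB).and ((hE _ (hAm.inter hBm)).and
      ((hE A hAm).and (hE B hBm)))))
  rw [Set.mem_preimage, Set.mem_singleton_iff] at hωc
  rw [Pi.mul_apply, hAB, hA', hB'] at hprod
  simp only [hωc, measureReal_def, ← ENNReal.toReal_mul] at hprod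
  exact (ENNReal.toReal_eq_toReal_iff' (measure_ne_top _ _)
    (ENNReal.mul_ne_top (measure_ne_top _ _) (measure_ne_top _ _))).1 hprod

lemma integral_cond_inter_eq_of_condExp_indicator_inter [Finite α] [mα : MeasurableSpace α]
    [MeasurableSingletonClass α] [IsFiniteMeasure μ] {X : Ω → α} (hX : Measurable X)
    {m₁ m₂ : MeasurableSpace Ω} (hle₁ : m₁ ≤ m) (hle₂ : m₂ ≤ m)
    (h : ∀ A B, MeasurableSet[m₁] A → MeasurableSet[m₂] B →
      μ[(A ∩ B).indicator (1 : Ω → ℝ) | mα.comap X]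
        =ᵐ[μ] μ[A.indicator 1 | mα.comap X] * μ[B.indicator 1 | mα.comap X])
    {A : Set Ω} (hA : MeasurableSet[m₁] A) (hf : StronglyMeasurable[m₂] f)
    (hfi : Integrable f μ) (c : α) (hμ : μ (X ⁻¹' {c} ∩ A) ≠ 0) :
    ∫ x, f x ∂μ[|X ⁻¹' {c} ∩ A] = ∫ x, f x ∂μ[|X ⁻¹' {c}] := by
  have hc := hX (measurableSet_singleton c)
  rw [← cond_cond_eq_cond_inter hc (hle₁ A hA)]
  exact integral_cond_eq_integral_of_indep
    (indep_cond_preimage_of_condExp_indicator_inter hX hle₁ hle₂ h c).symm hle₂ hle₁ hf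
    (hfi.cond _) hA (cond_pos_of_inter_ne_zero hc hμ).ne'

variable {β : Type*} [mβ : MeasurableSpace β]

lemma map_cond_preimage {F : Ω → β} (hF : Measurable F) {s : Set β} (hs : MeasurableSet s) :
    (μ[|F ⁻¹' s]).map F = (μ.map F)[|s] := by
  ext t ht
  rw [Measure.map_apply hF ht, cond_apply (hF hs), cond_apply hs, Measure.map_apply hF hs,
    Measure.map_apply hF (hs.inter ht), Set.preimage_inter]

lemma integral_cond_preimage_eq_of_map_eq {Ω' : Type*} [MeasurableSpace Ω'] {ν : Measure Ω'}
    {F : Ω → β} {G : Ω' → β} (hF : Measurable F) (hG : Measurable G)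
    (hFG : μ.map F = ν.map G) {s : Set β} (hs : MeasurableSet s) {h : β → ℝ}
    (hh : Measurable h) :
    ∫ x, h (F x) ∂μ[|F ⁻¹' s] = ∫ x, h (G x) ∂ν[|G ⁻¹' s] := by
  rw [← integral_map hF.aemeasurable hh.aestronglyMeasurable, map_cond_preimage hF hs, hFG,
    ← map_cond_preimage hG hs, integral_map hG.aemeasurable hh.aestronglyMeasurable]

lemma integral_cond_inter_eq_of_iIndepFun {ι : Type*} [IsFiniteMeasure μ] {F : ι → Ω → β}
    (hF : iIndepFun F μ) (hFm : ∀ i, Measurable (F i)) {i : ι} {J : Set ι} (hiJ : i ∉ J)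
    {h : β → ℝ} (hh : Measurable h) (hint : Integrable (fun x => h (F i x)) μ)
    {s : Set β} (hs : MeasurableSet s) {C : Set Ω}
    (hC : MeasurableSet[⨆ j ∈ J, mβ.comap (F j)] C) (hμ : μ (F i ⁻¹' s ∩ C) ≠ 0) :
    ∫ x, h (F i x) ∂μ[|F i ⁻¹' s ∩ C] = ∫ x, h (F i x) ∂μ[|F i ⁻¹' s] := by
  have hle : ∀ j, mβ.comap (F j) ≤ m := fun j => (hFm j).comap_le
  have hleJ : ⨆ j ∈ J, mβ.comap (F j) ≤ m := iSup₂_le fun j _ => hle j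
  have hind : Indep (mβ.comap (F i)) (⨆ j ∈ J, mβ.comap (F j)) μ := by
    simpa using indep_iSup_of_disjoint hle ((iIndepFun_iff_iIndep _ _ _).1 hF)
      (Set.disjoint_singleton_left.2 hiJ)
  have hs' : MeasurableSet[mβ.comap (F i)] (F i ⁻¹' s) := ⟨s, hs, rfl⟩
  rw [← cond_cond_eq_cond_inter (hFm i hs) (hleJ C hC)]
  exact integral_cond_eq_integral_of_indep (hind.cond (hle i) hs') (hle i) hleJ
    (hh.comp (Measurable.of_comap_le le_rfl)).stronglyMeasurable (hint.cond _) hC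
    (cond_pos_of_inter_ne_zero (hFm i hs) hμ).ne'

end ProbabilityTheory

namespace MeasurableSpace

variable {Ω β : Type*} [mβ : MeasurableSpace β]

lemma iSup_comap_range_eq_comap_pi (n : ℕ) (V : ℕ → Ω → β) :
    ⨆ i ∈ range n, mβ.comap (V i) = MeasurableSpace.pi.comap fun ω (j : Fin n) => V j ω := by
  rw [MeasurableSpace.pi, comap_iSup]
  simp only [comap_comp]
  exact le_antisymm (iSup₂_le fun i hi => le_iSup_of_le ⟨i, mem_range.1 hi⟩ le_rfl)
    (iSup_le fun j => le_iSup₂_of_le (j : ℕ) (mem_range.2 j.2) le_rfl)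

end MeasurableSpace

section Design

variable {Ω ζ κ : Type*} {n : ℕ} {Z : ℕ → Ω → ζ} {I : ℕ → Ω → κ}

/-- `𝒟ₙ` is the σ-algebra generated by this map. -/
def design (n : ℕ) (Z : ℕ → Ω → ζ) (I : ℕ → Ω → κ) (ω : Ω) : (Fin n → ζ) × (Fin n → κ) :=
  (fun j => Z j ω, fun j => I j ω)

lemma eq_of_design_eq {x ω : Ω} (h : design n Z I x = design n Z I ω) {i : ℕ}
    (hi : i ∈ range n) : Z i x = Z i ω ∧ I i x = I i ω :=
  ⟨congrFun (congrArg Prod.fst h) ⟨i, mem_range.1 hi⟩,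
    congrFun (congrArg Prod.snd h) ⟨i, mem_range.1 hi⟩⟩

variable [mζ : MeasurableSpace ζ] [mκ : MeasurableSpace κ]

lemma measurable_design [MeasurableSpace Ω] (hZ : ∀ i, Measurable (Z i))
    (hI : ∀ i, Measurable (I i)) : Measurable (design n Z I) :=
  (measurable_pi_lambda _ fun j : Fin n => hZ j).prodMk
    (measurable_pi_lambda _ fun j : Fin n => hI j)

lemma comap_design : MeasurableSpace.comap (design n Z I) inferInstance
    = (⨆ i ∈ range n, mζ.comap (Z i)) ⊔ ⨆ i ∈ range n, mκ.comap (I i) := by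
  rw [MeasurableSpace.iSup_comap_range_eq_comap_pi, MeasurableSpace.iSup_comap_range_eq_comap_pi,
    ← MeasurableSpace.comap_prodMk]
  rfl

end Design

section Stratified

variable {Ω κ ζ : Type*} [DecidableEq κ] [DecidableEq ζ] (n : ℕ) (zs : ℕ → ζ) (as : ℕ → κ)

def stratumCount (z : ζ) : ℕ := #{i ∈ range n | zs i = z}

def armCount (t : κ) (z : ζ) : ℕ := #{i ∈ range n | as i = t ∧ zs i = z}

/-- `Ȳ_t(z)` for observed responses `y`; division by zero gives the convention `Ȳ_t(z) = 0`
when `n_t(z) = 0`. -/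
noncomputable def armMean (y : ℕ → ℝ) (t : κ) (z : ζ) : ℝ :=
  (∑ i ∈ range n, if as i = t ∧ zs i = z then y i else 0) / armCount n zs as t z

noncomputable def stratifiedDiff [Fintype ζ] (y : ℕ → ℝ) (t s : κ) : ℝ :=
  ∑ z, (stratumCount n zs z / n : ℝ) * (armMean n zs as y t z - armMean n zs as y s z)

variable {n zs as}

lemma armMean_of_eq {m : κ → ζ → ℝ} {y : ℕ → ℝ} (hy : ∀ i ∈ range n, y i = m (as i) (zs i))
    {t : κ} {z : ζ} (hpos : 0 < armCount n zs as t z) : armMean n zs as y t z = m t z := by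
  have hsum : (∑ i ∈ range n, if as i = t ∧ zs i = z then y i else 0)
      = ∑ i ∈ range n, if as i = t ∧ zs i = z then m t z else 0 :=
    sum_congr rfl fun i hi => by split_ifs with hc <;> simp [hy i hi, hc]
  rw [armMean, hsum, ← sum_filter, sum_const, nsmul_eq_mul, ← armCount,
    mul_div_cancel_left₀ _ (Nat.cast_ne_zero.2 hpos.ne')]

lemma stratifiedDiff_congr [Fintype ζ] {zs' : ℕ → ζ} {as' : ℕ → κ}
    (h : ∀ i ∈ range n, zs i = zs' i ∧ as i = as' i) (y : ℕ → ℝ) (t s : κ) :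
    stratifiedDiff n zs as y t s = stratifiedDiff n zs' as' y t s := by
  have hc : stratumCount n zs = stratumCount n zs' :=
    funext fun z => congrArg card (filter_congr fun i hi => by rw [(h i hi).1])
  have ha : armCount n zs as = armCount n zs' as' :=
    funext₂ fun t z => congrArg card (filter_congr fun i hi => by rw [(h i hi).1, (h i hi).2])
  have hm : armMean n zs as y = armMean n zs' as' y := by
    funext t z
    simp only [armMean, ha]
    exact congrArg (· / _) (sum_congr rfl fun i hi => by rw [(h i hi).1, (h i hi).2])
  simp only [stratifiedDiff, hc, hm]

lemma stratifiedDiff_of_eq [Fintype ζ] {m : κ → ζ → ℝ} {y : ℕ → ℝ}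
    (hy : ∀ i ∈ range n, y i = m (as i) (zs i)) {t s : κ}
    (hpos : ∀ z, 0 < armCount n zs as t z ∧ 0 < armCount n zs as s z) :
    stratifiedDiff n zs as y t s = ∑ z, (stratumCount n zs z / n : ℝ) * (m t z - m s z) :=
  sum_congr rfl fun z _ => by rw [armMean_of_eq hy (hpos z).1, armMean_of_eq hy (hpos z).2]

variable [MeasurableSpace Ω] {μ : Measure Ω} {U : ℕ → Ω → ℝ}

lemma integrable_armMean (hU : ∀ i ∈ range n, Integrable (U i) μ) (t : κ) (z : ζ) :
    Integrable (fun x => armMean n zs as (U · x) t z) μ :=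
  (integrable_finsetSum _ fun i hi => by
    split_ifs
    exacts [hU i hi, integrable_zero _ _ _]).div_const _

lemma integral_armMean (hU : ∀ i ∈ range n, Integrable (U i) μ) (t : κ) (z : ζ) :
    ∫ x, armMean n zs as (U · x) t z ∂μ = armMean n zs as (fun i => ∫ x, U i x ∂μ) t z := by
  simp only [armMean]
  rw [integral_div, integral_finsetSum]
  · exact congrArg (· / _) (sum_congr rfl fun i _ => by split_ifs <;> simp)
  · intro i hi
    split_ifs
    exacts [hU i hi, integrable_zero _ _ _]

variable [Fintype ζ]

lemma integrable_stratifiedDiff (hU : ∀ i ∈ range n, Integrable (U i) μ) (t s : κ) :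
    Integrable (fun x => stratifiedDiff n zs as (U · x) t s) μ :=
  integrable_finsetSum _ fun z _ =>
    ((integrable_armMean hU t z).sub (integrable_armMean hU s z)).const_mul _

lemma integral_stratifiedDiff (hU : ∀ i ∈ range n, Integrable (U i) μ) (t s : κ) :
    ∫ x, stratifiedDiff n zs as (U · x) t s ∂μ
      = stratifiedDiff n zs as (fun i => ∫ x, U i x ∂μ) t s := by
  simp only [stratifiedDiff]
  rw [integral_finsetSum]
  · refine sum_congr rfl fun z _ => ?_
    rw [integral_const_mul, integral_sub (integrable_armMean hU t z)
      (integrable_armMean hU s z), integral_armMean hU, integral_armMean hU]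
  · exact fun z _ => ((integrable_armMean hU t z).sub (integrable_armMean hU s z)).const_mul _

lemma condExp_stratifiedDiff_ae_eq [IsFiniteMeasure μ] [mζ : MeasurableSpace ζ]
    [MeasurableSingletonClass ζ] [Fintype κ] [mκ : MeasurableSpace κ]
    [MeasurableSingletonClass κ] {Z : ℕ → Ω → ζ} {I : ℕ → Ω → κ}
    (hZ : ∀ i, Measurable (Z i)) (hI : ∀ i, Measurable (I i)) {U : ℕ → Ω → ℝ}
    {m : κ → ζ → ℝ} (hU : ∀ ω, ∀ i ∈ range n,
      Integrable (U i) μ[|design n Z I ⁻¹' {design n Z I ω}])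
    (hmean : ∀ ω, μ (design n Z I ⁻¹' {design n Z I ω}) ≠ 0 → ∀ i ∈ range n,
      ∫ x, U i x ∂μ[|design n Z I ⁻¹' {design n Z I ω}] = m (I i ω) (Z i ω))
    (t s : κ) :
    ∀ᵐ ω ∂μ, (∀ z, 0 < armCount n (Z · ω) (I · ω) t z ∧ 0 < armCount n (Z · ω) (I · ω) s z) →
      μ[fun x => stratifiedDiff n (Z · x) (I · x) (U · x) t s
          | (⨆ i ∈ range n, mζ.comap (Z i)) ⊔ ⨆ i ∈ range n, mκ.comap (I i)] ω
        = ∑ z, (stratumCount n (Z · ω) z / n : ℝ) * (m t z - m s z) := by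
  rw [← comap_design]
  set X := design n Z I
  have hX : Measurable X := measurable_design hZ hI
  have hfiber : ∀ ω, (fun x => stratifiedDiff n (Z · x) (I · x) (U · x) t s)
      =ᵐ[μ[|X ⁻¹' {X ω}]] fun x => stratifiedDiff n (Z · ω) (I · ω) (U · x) t s :=
    fun ω => ae_cond_of_forall_mem (hX (measurableSet_singleton _)) fun x hx =>
      stratifiedDiff_congr (fun i hi => eq_of_design_eq hx hi) _ _ _
  have hint : Integrable (fun x => stratifiedDiff n (Z · x) (I · x) (U · x) t s) μ :=
    integrable_of_forall_integrable_cond_preimage hX fun ω =>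
      (integrable_stratifiedDiff (hU ω) t s).congr (hfiber ω).symm
  filter_upwards [condExp_comap_ae_eq_integral_cond hX hint,
    ae_measure_preimage_singleton_ne_zero (X := X)] with ω hω hpos hev
  rw [hω, integral_congr_ae (hfiber ω), integral_stratifiedDiff (hU ω),
    stratifiedDiff_of_eq (hmean ω hpos) hev]

end Stratified

section Sampling

variable {Ω β ζ κ : Type*} [MeasurableSpace Ω] {μ : Measure Ω} [IsFiniteMeasure μ]
  [mβ : MeasurableSpace β] [mζ : MeasurableSpace ζ] [MeasurableSingletonClass ζ]
  {F : ℕ → Ω → β} {G : Ω → β} {ζF : β → ζ} {h : β → ℝ}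

lemma integral_cond_strata_eq_of_iIndepFun (hF : iIndepFun F μ) (hFm : ∀ i, Measurable (F i))
    (hG : Measurable G) (hFG : ∀ i, μ.map (F i) = μ.map G) (hζ : Measurable ζF)
    (hh : Measurable h) (hint : Integrable (fun x => h (G x)) μ) {n : ℕ} (v : Fin n → ζ)
    (j : Fin n) (hμ : μ {x | ∀ l : Fin n, ζF (F l x) = v l} ≠ 0) :
    ∫ x, h (F j x) ∂μ[|{x | ∀ l : Fin n, ζF (F l x) = v l}]
      = ∫ x, h (G x) ∂μ[|G ⁻¹' (ζF ⁻¹' {v j})] := by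
  have hmeas : ∀ l, MeasurableSet (ζF ⁻¹' {v l}) := fun l => hζ (measurableSet_singleton _)
  set C := {x | ∀ l : Fin n, l ≠ j → ζF (F l x) = v l}
  have hsplit : {x | ∀ l : Fin n, ζF (F l x) = v l} = F j ⁻¹' (ζF ⁻¹' {v j}) ∩ C := by
    ext x
    exact ⟨fun hx => ⟨hx j, fun l _ => hx l⟩,
      fun ⟨hj, hx⟩ l => if hl : l = j then hl ▸ hj else hx l hl⟩
  have hC : MeasurableSet[⨆ i ∈ ({(j : ℕ)}ᶜ : Set ℕ), mβ.comap (F i)] C := by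
    have hC : C = ⋂ l, ⋂ (_ : l ≠ j), F l ⁻¹' (ζF ⁻¹' {v l}) := by ext; simp [C]
    rw [hC]
    refine .iInter fun l => .iInter fun hl => ?_
    exact le_iSup₂ (f := fun i (_ : i ∈ ({(j : ℕ)}ᶜ : Set ℕ)) => mβ.comap (F i))
      (l : ℕ) (Fin.val_injective.ne hl) _ ⟨_, hmeas l, rfl⟩
  have hident : IdentDistrib (F j) G μ μ := ⟨(hFm j).aemeasurable, hG.aemeasurable, hFG j⟩
  rw [hsplit] at hμ ⊢
  rw [integral_cond_inter_eq_of_iIndepFun hF hFm (by simp) hh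
      ((hident.comp hh).integrable_iff.2 hint) (hmeas j) hC hμ,
    integral_cond_preimage_eq_of_map_eq (hFm j) hG (hFG j) (hmeas j) hh]

lemma integral_cond_design_eq [Finite ζ] [Finite κ] [mκ : MeasurableSpace κ]
    [MeasurableSingletonClass κ] (hF : iIndepFun F μ) (hFm : ∀ i, Measurable (F i))
    (hG : Measurable G) (hFG : ∀ i, μ.map (F i) = μ.map G) (hζ : Measurable ζF)
    {Z : ℕ → Ω → ζ} (hZ : ∀ i ω, Z i ω = ζF (F i ω)) {I : ℕ → Ω → κ}
    (hI : ∀ i, Measurable (I i)) {n : ℕ}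
    (hC2 : ∀ A B, MeasurableSet[⨆ i ∈ range n, mκ.comap (I i)] A →
      MeasurableSet[⨆ i ∈ range n, mβ.comap (F i)] B →
      μ[(A ∩ B).indicator (1 : Ω → ℝ) | ⨆ i ∈ range n, mζ.comap (Z i)]
        =ᵐ[μ] μ[A.indicator 1 | ⨆ i ∈ range n, mζ.comap (Z i)]
          * μ[B.indicator 1 | ⨆ i ∈ range n, mζ.comap (Z i)])
    (hh : Measurable h) (hint : Integrable (fun x => h (G x)) μ) (ω : Ω)
    (hpos : μ (design n Z I ⁻¹' {design n Z I ω}) ≠ 0) {i : ℕ} (hi : i < n) :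
    ∫ x, h (F i x) ∂μ[|design n Z I ⁻¹' {design n Z I ω}]
      = ∫ x, h (G x) ∂μ[|G ⁻¹' (ζF ⁻¹' {Z i ω})] := by
  set ZV := fun ω (j : Fin n) => Z j ω
  set IV := fun ω (j : Fin n) => I j ω
  rw [MeasurableSpace.iSup_comap_range_eq_comap_pi n Z,
    MeasurableSpace.iSup_comap_range_eq_comap_pi n I] at hC2
  have hZm : ∀ i, Measurable (Z i) := fun i => by
    rw [funext (hZ i)]; exact hζ.comp (hFm i)
  have hZV : Measurable ZV := measurable_pi_lambda _ fun j : Fin n => hZm j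
  have hIV : Measurable IV := measurable_pi_lambda _ fun j : Fin n => hI j
  have hFle : ⨆ i ∈ range n, mβ.comap (F i) ≤ ‹MeasurableSpace Ω› :=
    iSup₂_le fun i _ => (hFm i).comap_le
  have hFi : StronglyMeasurable[⨆ i ∈ range n, mβ.comap (F i)] fun x => h (F i x) :=
    (hh.comp (Measurable.of_comap_le (le_iSup₂ (f := fun i (_ : i ∈ range n) =>
      mβ.comap (F i)) i (mem_range.2 hi)))).stronglyMeasurable
  have hidentF : IdentDistrib (F i) G μ μ := ⟨(hFm i).aemeasurable, hG.aemeasurable, hFG i⟩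
  have hatom : design n Z I ⁻¹' {design n Z I ω} = ZV ⁻¹' {ZV ω} ∩ IV ⁻¹' {IV ω} := by
    ext; simp [design, ZV, IV, Prod.ext_iff]
  have hstrata : ZV ⁻¹' {ZV ω} = {x | ∀ l : Fin n, ζF (F l x) = ZV ω l} := by
    ext; simp [ZV, funext_iff, hZ]
  rw [hatom] at hpos ⊢
  rw [integral_cond_inter_eq_of_condExp_indicator_inter hZV hIV.comap_le hFle hC2
      ⟨{IV ω}, measurableSet_singleton _, rfl⟩ hFi ((hidentF.comp hh).integrable_iff.2 hint)
      (ZV ω) hpos, hstrata]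
  exact integral_cond_strata_eq_of_iIndepFun hF hFm hG hFG hζ hh hint (ZV ω) ⟨i, hi⟩
    (hstrata ▸ fun h0 => hpos (measure_mono_null Set.inter_subset_left h0))

end Sampling

theorem stmt12_general {Ω : Type*} [MeasurableSpace Ω] (P : Measure Ω) [IsProbabilityMeasure P]
    {𝓦 : Type*} [MeasurableSpace 𝓦]
    {𝓩 : Type*} [Fintype 𝓩] [DecidableEq 𝓩] [MeasurableSpace 𝓩] [MeasurableSingletonClass 𝓩]
    {k : ℕ}
    -- (C1): the i.i.d. sequence and its population version
    (Y : ℕ → Fin k → Ω → ℝ) (W : ℕ → Ω → 𝓦)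
    (Ypop : Fin k → Ω → ℝ) (Wpop : Ω → 𝓦)
    (hYmeas : ∀ i t, Measurable (Y i t)) (hWmeas : ∀ i, Measurable (W i))
    (hYpopmeas : ∀ t, Measurable (Ypop t)) (hWpopmeas : Measurable Wpop)
    (hident : ∀ i, Measure.map (fun ω => ((fun t => Y i t ω), W i ω)) P
        = Measure.map (fun ω => ((fun t => Ypop t ω), Wpop ω)) P)
    (hindep : iIndepFun
        (fun i ω => ((fun t => Y i t ω), W i ω)) P)
    (hY2 : ∀ t, MemLp (Ypop t) 2 P)
    -- strata
    (g : 𝓦 → 𝓩) (hg : Measurable g)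
    (Z : ℕ → Ω → 𝓩) (hZdef : ∀ i ω, Z i ω = g (W i ω))
    (Zpop : Ω → 𝓩) (hZpopdef : ∀ ω, Zpop ω = g (Wpop ω))
    -- treatment assignments and observed responses
    (I : ℕ → Ω → Fin k) (hImeas : ∀ i, Measurable (I i))
    (Yobs : ℕ → Ω → ℝ) (hYobs : ∀ i ω, Yobs i ω = Y i (I i ω) ω)
    -- stratum/treatment counts
    (Nz : ℕ → 𝓩 → Ω → ℕ)
    (hNz : ∀ n z ω, Nz n z ω = ((range n).filter fun i => Z i ω = z).card)
    (Ntz : ℕ → Fin k → 𝓩 → Ω → ℕ)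
    (hNtz : ∀ n t z ω,
      Ntz n t z ω = ((range n).filter fun i => I i ω = t ∧ Z i ω = z).card)
    -- σ-algebras generated by the strata, the assignments, and the raw data
    (𝒢 σI σYW : ℕ → MeasurableSpace Ω)
    (h𝒢 : ∀ n, 𝒢 n = ⨆ i ∈ range n, MeasurableSpace.comap (Z i) inferInstance)
    (hσI : ∀ n, σI n = ⨆ i ∈ range n, MeasurableSpace.comap (I i) inferInstance)
    (hσYW : ∀ n, σYW n = ⨆ i ∈ range n,
        MeasurableSpace.comap (fun ω => ((fun t => Y i t ω), W i ω)) inferInstance)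
    -- (C2): conditional independence of assignments and data given the strata
    (hC2 : ∀ n (A B : Set Ω), MeasurableSet[σI n] A → MeasurableSet[σYW n] B →
        MeasureTheory.condExp (𝒢 n) P ((A ∩ B).indicator fun _ => (1 : ℝ))
          =ᵐ[P] fun ω =>
            MeasureTheory.condExp (𝒢 n) P (A.indicator fun _ => (1 : ℝ)) ω
              * MeasureTheory.condExp (𝒢 n) P (B.indicator fun _ => (1 : ℝ)) ω)
    -- the two fixed treatments and the average treatment effect
    (tt ss : Fin k)
    -- stratified sample means and the stratified estimator
    (Ybar : ℕ → Fin k → 𝓩 → Ω → ℝ)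
    (hYbar : ∀ n t z ω, Ybar n t z ω
      = (∑ i ∈ range n, if I i ω = t ∧ Z i ω = z then Yobs i ω else 0)
          / (Ntz n t z ω : ℝ))
    (θhat : ℕ → Ω → ℝ)
    (hθhat : ∀ n ω, θhat n ω
      = ∑ z, ((Nz n z ω : ℝ) / (n : ℝ)) * (Ybar n tt z ω - Ybar n ss z ω))
    -- the σ-algebra generated by strata and assignments
    (𝒟 : ℕ → MeasurableSpace Ω) (h𝒟 : ∀ n, 𝒟 n = 𝒢 n ⊔ σI n) :
    ∀ n : ℕ, ∀ᵐ ω ∂P,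
      (∀ z, 1 ≤ Ntz n tt z ω ∧ 1 ≤ Ntz n ss z ω) →
        MeasureTheory.condExp (𝒟 n) P (θhat n) ω
          = ∑ z, ((Nz n z ω : ℝ) / (n : ℝ)) *
              ((∫ ω', Ypop tt ω' ∂(P[|{ω' | Zpop ω' = z}]))
                - ∫ ω', Ypop ss ω' ∂(P[|{ω' | Zpop ω' = z}])) := by
  intro n
  set F : ℕ → Ω → (Fin k → ℝ) × 𝓦 := fun i ω => ((fun t => Y i t ω), W i ω)
  set Fpop : Ω → (Fin k → ℝ) × 𝓦 := fun ω => ((fun t => Ypop t ω), Wpop ω)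
  have hFm : ∀ i, Measurable (F i) := fun i =>
    (measurable_pi_lambda _ (hYmeas i)).prodMk (hWmeas i)
  have hFpop : Measurable Fpop := (measurable_pi_lambda _ hYpopmeas).prodMk hWpopmeas
  have hZm : ∀ i, Measurable (Z i) := fun i => by
    rw [funext (hZdef i)]; exact hg.comp (hWmeas i)
  have hYpop : ∀ t, Integrable (Ypop t) P := fun t => (hY2 t).integrable one_le_two
  have hYint : ∀ i t, Integrable (Y i t) P := fun i t =>
    ((IdentDistrib.mk (hFm i).aemeasurable hFpop.aemeasurable (hident i)).comp
      (measurable_pi_apply t |>.comp measurable_fst)).integrable_iff.2 (hYpop t)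
  have hobs : ∀ ω, ∀ i ∈ range n,
      Yobs i =ᵐ[P[|design n Z I ⁻¹' {design n Z I ω}]] Y i (I i ω) := fun ω i hi =>
    ae_cond_of_forall_mem (measurable_design hZm hImeas (measurableSet_singleton _))
      fun x hx => by rw [hYobs, (eq_of_design_eq hx hi).2]
  have hmean : ∀ ω, P (design n Z I ⁻¹' {design n Z I ω}) ≠ 0 → ∀ i ∈ range n,
      ∫ x, Yobs i x ∂P[|design n Z I ⁻¹' {design n Z I ω}]
        = ∫ x, Ypop (I i ω) x ∂P[|{x | Zpop x = Z i ω}] := fun ω hpos i hi => by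
    have hstratum : Fpop ⁻¹' ((g ∘ Prod.snd) ⁻¹' {Z i ω}) = {x | Zpop x = Z i ω} := by
      ext; simp [Fpop, hZpopdef]
    rw [integral_congr_ae (hobs ω i hi), ← hstratum]
    exact integral_cond_design_eq (h := fun p => p.1 (I i ω)) hindep hFm hFpop hident
      (hg.comp measurable_snd) hZdef hImeas (h𝒢 n ▸ hσI n ▸ hσYW n ▸ hC2 n)
      (measurable_pi_apply _ |>.comp measurable_fst) (hYpop _) ω hpos (mem_range.1 hi)
  have hθn : θhat n = fun x => stratifiedDiff n (Z · x) (I · x) (Yobs · x) tt ss :=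
    funext fun x => by
      simp only [hθhat, hYbar, hNz, hNtz, stratifiedDiff, armMean, armCount, stratumCount]
  rw [h𝒟, h𝒢, hσI, hθn]
  filter_upwards [condExp_stratifiedDiff_ae_eq
    (m := fun t z => ∫ x, Ypop t x ∂P[|{x | Zpop x = z}]) hZm hImeas
    (fun ω i hi => ((hYint i (I i ω)).cond _).congr (hobs ω i hi).symm) hmean tt ss]
    with ω hω hev
  rw [hω fun z => by simp only [armCount, ← hNtz]; exact hev z]
  simp only [stratumCount, hNz]

/-- Under (C1)–(C3), for every fixed `n`, almost surely on the event that
every stratum contains at least one patient in each of the arms `t` and `s`, the conditional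
expectation of `θ̂` given `𝒟ₙ = σ(Z₁,…,Zₙ,I₁,…,Iₙ)` equals
`∑_z (n(z)/n) (E(Y⁽ᵗ⁾ | Z = z) − E(Y⁽ˢ⁾ | Z = z))`. -/
theorem stmt12 {Ω : Type*} [MeasurableSpace Ω] (P : Measure Ω) [IsProbabilityMeasure P]
    {𝓦 : Type*} [MeasurableSpace 𝓦]
    {𝓩 : Type*} [Fintype 𝓩] [DecidableEq 𝓩] [MeasurableSpace 𝓩] [MeasurableSingletonClass 𝓩]
    {k : ℕ} (hk : 2 ≤ k)
    (π : Fin k → ℝ) (hπ : ∀ t, π t ∈ Set.Ioo (0 : ℝ) 1) (hπsum : ∑ t, π t = 1)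
    -- (C1): the i.i.d. sequence and its population version
    (Y : ℕ → Fin k → Ω → ℝ) (W : ℕ → Ω → 𝓦)
    (Ypop : Fin k → Ω → ℝ) (Wpop : Ω → 𝓦)
    (hYmeas : ∀ i t, Measurable (Y i t)) (hWmeas : ∀ i, Measurable (W i))
    (hYpopmeas : ∀ t, Measurable (Ypop t)) (hWpopmeas : Measurable Wpop)
    (hident : ∀ i, Measure.map (fun ω => ((fun t => Y i t ω), W i ω)) P
        = Measure.map (fun ω => ((fun t => Ypop t ω), Wpop ω)) P)
    (hindep : iIndepFun
        (fun i ω => ((fun t => Y i t ω), W i ω)) P)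
    (hY2 : ∀ t, MemLp (Ypop t) 2 P)
    -- strata
    (g : 𝓦 → 𝓩) (hg : Measurable g)
    (Z : ℕ → Ω → 𝓩) (hZdef : ∀ i ω, Z i ω = g (W i ω))
    (Zpop : Ω → 𝓩) (hZpopdef : ∀ ω, Zpop ω = g (Wpop ω))
    (hZpos : ∀ z, 0 < P {ω | Zpop ω = z})
    -- treatment assignments and observed responses
    (I : ℕ → Ω → Fin k) (hImeas : ∀ i, Measurable (I i))
    (Yobs : ℕ → Ω → ℝ) (hYobs : ∀ i ω, Yobs i ω = Y i (I i ω) ω)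
    -- stratum/treatment counts
    (Nz : ℕ → 𝓩 → Ω → ℕ)
    (hNz : ∀ n z ω, Nz n z ω = ((range n).filter fun i => Z i ω = z).card)
    (Ntz : ℕ → Fin k → 𝓩 → Ω → ℕ)
    (hNtz : ∀ n t z ω,
      Ntz n t z ω = ((range n).filter fun i => I i ω = t ∧ Z i ω = z).card)
    -- σ-algebras generated by the strata, the assignments, and the raw data
    (𝒢 σI σYW : ℕ → MeasurableSpace Ω)
    (h𝒢 : ∀ n, 𝒢 n = ⨆ i ∈ range n, MeasurableSpace.comap (Z i) inferInstance)
    (hσI : ∀ n, σI n = ⨆ i ∈ range n, MeasurableSpace.comap (I i) inferInstance)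
    (hσYW : ∀ n, σYW n = ⨆ i ∈ range n,
        MeasurableSpace.comap (fun ω => ((fun t => Y i t ω), W i ω)) inferInstance)
    -- (C2): conditional independence of assignments and data given the strata
    (hC2 : ∀ n (A B : Set Ω), MeasurableSet[σI n] A → MeasurableSet[σYW n] B →
        MeasureTheory.condExp (𝒢 n) P ((A ∩ B).indicator fun _ => (1 : ℝ))
          =ᵐ[P] fun ω =>
            MeasureTheory.condExp (𝒢 n) P (A.indicator fun _ => (1 : ℝ)) ω
              * MeasureTheory.condExp (𝒢 n) P (B.indicator fun _ => (1 : ℝ)) ω)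
    -- (C3): conditional assignment probabilities and vanishing relative imbalance
    (hC3a : ∀ n, ∀ i < n, ∀ t,
        MeasureTheory.condExp (𝒢 n) P ({ω | I i ω = t}.indicator fun _ => (1 : ℝ))
          =ᵐ[P] fun _ => π t)
    -- the two fixed treatments and the average treatment effect
    (tt ss : Fin k) (hts : tt ≠ ss)
    (θ : ℝ) (hθ : θ = ∫ ω, (Ypop tt ω - Ypop ss ω) ∂P)
    -- stratified sample means and the stratified estimator
    (Ybar : ℕ → Fin k → 𝓩 → Ω → ℝ)
    (hYbar : ∀ n t z ω, Ybar n t z ω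
      = (∑ i ∈ range n, if I i ω = t ∧ Z i ω = z then Yobs i ω else 0)
          / (Ntz n t z ω : ℝ))
    (θhat : ℕ → Ω → ℝ)
    (hθhat : ∀ n ω, θhat n ω
      = ∑ z, ((Nz n z ω : ℝ) / (n : ℝ)) * (Ybar n tt z ω - Ybar n ss z ω))
    -- the σ-algebra generated by strata and assignments
    (𝒟 : ℕ → MeasurableSpace Ω) (h𝒟 : ∀ n, 𝒟 n = 𝒢 n ⊔ σI n) :
    ∀ n : ℕ, ∀ᵐ ω ∂P,
      (∀ z, 1 ≤ Ntz n tt z ω ∧ 1 ≤ Ntz n ss z ω) →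
        MeasureTheory.condExp (𝒟 n) P (θhat n) ω
          = ∑ z, ((Nz n z ω : ℝ) / (n : ℝ)) *
              ((∫ ω', Ypop tt ω' ∂(P[|{ω' | Zpop ω' = z}]))
                - ∫ ω', Ypop ss ω' ∂(P[|{ω' | Zpop ω' = z}])) :=
  stmt12_general P Y W Ypop Wpop hYmeas hWmeas hYpopmeas hWpopmeas hident hindep hY2 g hg Z hZdef
    Zpop hZpopdef I hImeas Yobs hYobs Nz hNz Ntz hNtz 𝒢 σI σYW h𝒢 hσI hσYW hC2 tt ss Ybar hYbar θhat
    hθhat 𝒟 h𝒟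
end
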